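/- Let H₁ and H₂ be valued hyperfields and let f : H₁ → H₂ be a morphism of valued hyperfields. Then the norms satisfy ρ_{H₂} ≥ ρ_{H₁}. -/
import Mathlib


/-- A (Krasner) valued hyperfield: a hyperfield with a multivalued addition,
single-valued multiplication, an absolute value, the induced distance `dist`,
and the norm `rho`. -/
structure ValuedHyperfield where
  carrier : Type
  add : carrier → carrier → Set carrier
  mul : carrier → carrier → carrier
  zero : carrier
  one : carrier
  neg : carrier → carrier
  abs : carrier → ℝ
  dist : carrier → carrier → ℝ
  rho : ℝ
  add_comm : ∀ x y, add x y = add y x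
  add_assoc : ∀ x y z, (⋃ t ∈ add x y, add t z) = ⋃ t ∈ add y z, add x t
  add_zero : ∀ x, add x zero = {x}
  neg_mem : ∀ x, zero ∈ add x (neg x)
  neg_unique : ∀ x y, zero ∈ add x y → y = neg x
  reverse : ∀ x y z, x ∈ add y (neg z) ↔ y ∈ add x z
  mul_comm : ∀ x y, mul x y = mul y x
  mul_assoc : ∀ x y z, mul (mul x y) z = mul x (mul y z)
  mul_one : ∀ x, mul x one = x
  one_ne_zero : one ≠ zero
  mul_inv : ∀ x, x ≠ zero → ∃ y, mul x y = one
  distrib : ∀ x y z, (fun t => mul t z) '' add x y ⊆ add (mul x z) (mul y z)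
  abs_nonneg : ∀ x, 0 ≤ abs x
  abs_eq_zero_iff : ∀ x, abs x = 0 ↔ x = zero
  abs_mul : ∀ x y, abs (mul x y) = abs x * abs y
  abs_add_le : ∀ x y z, z ∈ add x y → abs z ≤ max (abs x) (abs y)
  abs_add_unique : ∀ x y, zero ∉ add x y →
    ∀ z w, z ∈ add x y → w ∈ add x y → abs z = abs w
  dist_self : ∀ x, dist x x = 0
  dist_eq : ∀ x y z, x ≠ y → z ∈ add x (neg y) → dist x y = abs z
  rho_nonneg : 0 ≤ rho
  rho_ball : ∀ x y, (∃ w, add x y = {z | dist z w ≤ rho * max (abs x) (abs y)}) ∨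
      (∃ w, add x y = {z | dist z w < rho * max (abs x) (abs y)})
  rho_min : ∀ r : ℝ, 0 ≤ r →
      (∀ x y, (∃ w, add x y = {z | dist z w ≤ r * max (abs x) (abs y)}) ∨
        (∃ w, add x y = {z | dist z w < r * max (abs x) (abs y)})) → rho ≤ r

/-- The valuation is discrete: every nonzero value of the absolute value is an
isolated point of the image of the absolute value. -/
def ValuedHyperfield.Discrete (V : ValuedHyperfield) : Prop :=
  ∀ r ∈ Set.range V.abs, r ≠ 0 →
    ∃ ε > (0 : ℝ), ∀ s ∈ Set.range V.abs, |s - r| < ε → s = r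

/-- `θ` is the largest absolute value which is strictly less than 1, attained
at some nonzero element. -/
def ValuedHyperfield.IsTheta (V : ValuedHyperfield) (θ : ℝ) : Prop :=
  (∃ x, x ≠ V.zero ∧ V.abs x = θ) ∧ θ < 1 ∧
    ∀ x, x ≠ V.zero → V.abs x < 1 → V.abs x ≤ θ

/-- A morphism of valued hyperfields. -/
structure VHHom (V W : ValuedHyperfield) where
  toFun : V.carrier → W.carrier
  map_mul : ∀ x y, toFun (V.mul x y) = W.mul (toFun x) (toFun y)
  preimage_add : ∀ a b, a ∈ Set.range toFun → b ∈ Set.range toFun →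
    toFun ⁻¹' (W.add a b) = ⋃ x ∈ toFun ⁻¹' {a}, ⋃ y ∈ toFun ⁻¹' {b}, V.add x y
  abs_map : ∀ x, W.abs (toFun x) = V.abs x
  fiber_one_ball : (∃ w r, toFun ⁻¹' {W.one} = {z | V.dist z w ≤ r}) ∨
    (∃ w r, toFun ⁻¹' {W.one} = {z | V.dist z w < r})

namespace ValuedHyperfield

variable (V : ValuedHyperfield)

lemma abs_zero' : V.abs V.zero = 0 := (V.abs_eq_zero_iff V.zero).2 rfl

lemma neg_zero' : V.neg V.zero = V.zero :=
  (V.neg_unique V.zero V.zero (by rw [V.add_zero]; exact rfl)).symm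

lemma neg_neg' (x : V.carrier) : V.neg (V.neg x) = x :=
  (V.neg_unique (V.neg x) x (by rw [V.add_comm]; exact V.neg_mem x)).symm

lemma add_nonempty' (x y : V.carrier) : (V.add x y).Nonempty := by
  have hz : V.zero ∈ V.add (V.neg x) x := by rw [V.add_comm]; exact V.neg_mem x
  have hy : y ∈ ⋃ t ∈ V.add (V.neg x) x, V.add t y :=
    Set.mem_biUnion hz (by rw [V.add_comm, V.add_zero]; exact rfl)
  rw [V.add_assoc] at hy
  obtain ⟨t, ht, -⟩ := Set.mem_iUnion₂.1 hy
  exact ⟨t, ht⟩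

lemma mul_zero' (x : V.carrier) : V.mul V.zero x = V.zero :=
  (V.abs_eq_zero_iff _).1 (by rw [V.abs_mul, V.abs_zero', zero_mul])

lemma one_mul' (x : V.carrier) : V.mul V.one x = x := by
  rw [V.mul_comm]; exact V.mul_one x

lemma neg_eq' (x : V.carrier) : V.neg x = V.mul (V.neg V.one) x := by
  have h0 : V.zero ∈ V.add x (V.mul (V.neg V.one) x) := by
    have hd := V.distrib V.one (V.neg V.one) x
    have hm : V.mul V.zero x ∈ (fun t => V.mul t x) '' V.add V.one (V.neg V.one) :=
      ⟨V.zero, V.neg_mem V.one, rfl⟩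
    have h2 := hd hm
    rw [V.mul_zero', V.one_mul'] at h2
    exact h2
  exact (V.neg_unique x _ h0).symm

lemma abs_one' : V.abs V.one = 1 := by
  have h := V.abs_mul V.one V.one
  rw [V.mul_one] at h
  have hne : V.abs V.one ≠ 0 := fun hc => V.one_ne_zero ((V.abs_eq_zero_iff _).1 hc)
  have h2 : V.abs V.one * 1 = V.abs V.one * V.abs V.one := by
    rw [_root_.mul_one]; exact h
  exact (mul_left_cancel₀ hne h2).symm

lemma abs_neg' (x : V.carrier) : V.abs (V.neg x) = V.abs x := by
  have h1 : V.one = V.mul (V.neg V.one) (V.neg V.one) := by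
    conv_lhs => rw [← V.neg_neg' V.one]
    exact V.neg_eq' (V.neg V.one)
  have h2 : V.abs (V.neg V.one) = 1 := by
    have h3 := V.abs_mul (V.neg V.one) (V.neg V.one)
    rw [← h1, V.abs_one'] at h3
    rcases mul_self_eq_one_iff.1 h3.symm with h | h
    · exact h
    · nlinarith [V.abs_nonneg (V.neg V.one)]
  rw [V.neg_eq' x, V.abs_mul, h2, one_mul]

lemma dist_zero_right' (z : V.carrier) : V.dist z V.zero = V.abs z := by
  by_cases hz : z = V.zero
  · rw [hz, V.dist_self, V.abs_zero']
  · exact V.dist_eq z V.zero z hz (by rw [V.neg_zero', V.add_zero]; exact rfl)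

lemma dist_nonneg' (a b : V.carrier) : 0 ≤ V.dist a b := by
  by_cases h : a = b
  · rw [h, V.dist_self]
  · obtain ⟨t, ht⟩ := V.add_nonempty' a (V.neg b)
    rw [V.dist_eq a b t h ht]; exact V.abs_nonneg t

lemma dist_comm' (a b : V.carrier) : V.dist a b = V.dist b a := by
  by_cases h : a = b
  · rw [h]
  · obtain ⟨t, ht⟩ := V.add_nonempty' a (V.neg b)
    have ha : a ∈ V.add t b := (V.reverse t a b).1 ht
    have hb : b ∈ V.add a (V.neg t) := by
      apply (V.reverse a b (V.neg t)).1
      rw [V.neg_neg', V.add_comm]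
      exact ha
    have hnt : V.neg t ∈ V.add b (V.neg a) := by
      apply (V.reverse (V.neg t) b a).2
      rw [V.add_comm] at hb
      exact hb
    rw [V.dist_eq a b t h ht, V.dist_eq b a (V.neg t) (Ne.symm h) hnt, V.abs_neg']

lemma ultrametric' (a b c : V.carrier) :
    V.dist a c ≤ max (V.dist a b) (V.dist b c) := by
  by_cases hac : a = c
  · rw [hac, V.dist_self]
    exact le_max_of_le_left (V.dist_nonneg' _ _)
  by_cases hab : a = b
  · subst hab; exact le_max_right _ _
  by_cases hbc : b = c
  · subst hbc; exact le_max_left _ _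
  obtain ⟨u, hu⟩ := V.add_nonempty' a (V.neg b)
  obtain ⟨s, hs⟩ := V.add_nonempty' a (V.neg c)
  have ha : a ∈ V.add u b := (V.reverse u a b).1 hu
  have hsl : s ∈ ⋃ t ∈ V.add u b, V.add t (V.neg c) := Set.mem_biUnion ha hs
  rw [V.add_assoc] at hsl
  obtain ⟨t, ht, hst⟩ := Set.mem_iUnion₂.1 hsl
  rw [V.dist_eq a c s hac hs, V.dist_eq a b u hab hu, V.dist_eq b c t hbc ht]
  exact V.abs_add_le u t s hst

lemma mem_helper (x y z w' : V.carrier) (hz : z ∈ V.add x y) (hw : w' ∈ V.add x y) :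
    ∃ t ∈ V.add (V.neg y) y, t ∈ V.add z (V.neg w') := by
  have hx : x ∈ V.add w' (V.neg y) := (V.reverse x w' y).2 hw
  have hzl : z ∈ ⋃ t ∈ V.add w' (V.neg y), V.add t y := Set.mem_biUnion hx hz
  rw [V.add_assoc] at hzl
  obtain ⟨t, ht, hzt⟩ := Set.mem_iUnion₂.1 hzl
  refine ⟨t, ht, (V.reverse t z w').2 ?_⟩
  rw [V.add_comm]
  exact hzt

end ValuedHyperfield

namespace VHHom

variable {V W : ValuedHyperfield} (f : VHHom V W)

lemma map_zero' : f.toFun V.zero = W.zero :=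
  (W.abs_eq_zero_iff _).1 (by rw [f.abs_map, V.abs_zero'])

lemma map_add_mem {x y z : V.carrier} (hz : z ∈ V.add x y) :
    f.toFun z ∈ W.add (f.toFun x) (f.toFun y) := by
  have h := f.preimage_add (f.toFun x) (f.toFun y) ⟨x, rfl⟩ ⟨y, rfl⟩
  have hmem : z ∈ f.toFun ⁻¹' (W.add (f.toFun x) (f.toFun y)) := by
    rw [h]
    exact Set.mem_biUnion (show x ∈ f.toFun ⁻¹' {f.toFun x} from rfl)
      (Set.mem_biUnion (show y ∈ f.toFun ⁻¹' {f.toFun y} from rfl) hz)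
  exact hmem

lemma key {V W : ValuedHyperfield} (f : VHHom V W) (x y z w' : V.carrier) (hz : z ∈ V.add x y) (hw : w' ∈ V.add x y) :
    V.dist z w' ≤ W.rho * V.abs y := by
  by_cases hne : z = w'
  · rw [hne, V.dist_self]
    exact mul_nonneg W.rho_nonneg (V.abs_nonneg y)
  obtain ⟨t, ht, hmem⟩ := V.mem_helper x y z w' hz hw
  rw [V.dist_eq z w' t hne hmem, ← f.abs_map t]
  have hft : f.toFun t ∈ W.add (f.toFun (V.neg y)) (f.toFun y) := f.map_add_mem ht
  have h0 : W.zero ∈ W.add (f.toFun (V.neg y)) (f.toFun y) := by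
    rw [← f.map_zero']
    exact f.map_add_mem (show V.zero ∈ V.add (V.neg y) y by
      rw [V.add_comm]; exact V.neg_mem y)
  have hmax : max (W.abs (f.toFun (V.neg y))) (W.abs (f.toFun y)) = V.abs y := by
    rw [f.abs_map, f.abs_map, V.abs_neg', max_self]
  have habs : ∀ c R, W.dist (f.toFun t) c ≤ R → W.dist W.zero c ≤ R →
      W.abs (f.toFun t) ≤ R := by
    intro c R h1 h2
    calc W.abs (f.toFun t) = W.dist (f.toFun t) W.zero := (W.dist_zero_right' _).symm
      _ ≤ max (W.dist (f.toFun t) c) (W.dist c W.zero) := W.ultrametric' _ _ _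
      _ ≤ R := max_le h1 (by rw [W.dist_comm']; exact h2)
  rcases W.rho_ball (f.toFun (V.neg y)) (f.toFun y) with ⟨c, hb⟩ | ⟨c, hb⟩
  · rw [hb] at hft h0
    simp only [Set.mem_setOf_eq, hmax] at hft h0
    exact habs c _ hft h0
  · rw [hb] at hft h0
    simp only [Set.mem_setOf_eq, hmax] at hft h0
    exact habs c _ hft.le h0.le

end VHHom

theorem stmt9 (V W : ValuedHyperfield) (f : VHHom V W) : V.rho ≤ W.rho := by
  rcases le_or_gt V.rho W.rho with h | hlt
  · exact h
  apply V.rho_min W.rho W.rho_nonneg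
  intro x y
  have hM0 : (0:ℝ) ≤ max (V.abs x) (V.abs y) :=
    le_trans (V.abs_nonneg x) (le_max_left _ _)
  have hkey : ∀ z w', z ∈ V.add x y → w' ∈ V.add x y →
      V.dist z w' ≤ W.rho * max (V.abs x) (V.abs y) := fun z w' hz hw =>
    le_trans (f.key x y z w' hz hw)
      (mul_le_mul_of_nonneg_left (le_max_right _ _) W.rho_nonneg)
  rcases V.rho_ball x y with ⟨w, hb⟩ | ⟨w, hb⟩
  · left
    refine ⟨w, ?_⟩
    have hwmem : w ∈ V.add x y := by
      rw [hb]
      show V.dist w w ≤ _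
      rw [V.dist_self]
      exact mul_nonneg V.rho_nonneg hM0
    ext z
    simp only [Set.mem_setOf_eq]
    constructor
    · intro hz
      exact hkey z w hz hwmem
    · intro hz
      rw [hb]
      show V.dist z w ≤ _
      exact le_trans hz (mul_le_mul_of_nonneg_right hlt.le hM0)
  · have hpos : 0 < V.rho * max (V.abs x) (V.abs y) := by
      by_contra hc
      push_neg at hc
      obtain ⟨u, hu⟩ := V.add_nonempty' x y
      rw [hb] at hu
      have hu' : V.dist u w < V.rho * max (V.abs x) (V.abs y) := hu
      exact absurd (lt_of_lt_of_le hu' hc) (not_lt.2 (V.dist_nonneg' u w))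
    have hwmem : w ∈ V.add x y := by
      rw [hb]
      show V.dist w w < _
      rw [V.dist_self]
      exact hpos
    left
    refine ⟨w, ?_⟩
    ext z
    simp only [Set.mem_setOf_eq]
    constructor
    · intro hz
      exact hkey z w hz hwmem
    · intro hz
      rw [hb]
      show V.dist z w < _
      refine lt_of_le_of_lt hz ?_
      have hMpos : 0 < max (V.abs x) (V.abs y) := by
        rcases hM0.lt_or_eq with h | h
        · exact h
        · exfalso
          rw [← h, mul_zero] at hpos
          exact lt_irrefl 0 hpos
      exact mul_lt_mul_of_pos_right hlt hMpos
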